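/- Let (B_n) be a sequence with B_n ⊆ {0,1}^n, let S_n = {k ∈ [n] : {k} is a singleton part of SP(B_n)}, and suppose: (1) there is a function f with f(n)/n → 0 such that |S_n| ≤ f(n) for all sufficiently large n; and (2) there is a constant c₁ > 0 with |SP(B_n)| ≥ c₁·n for all sufficiently large n. Then |Orbit_n(B_n)| grows faster than any polynomial in 2^n; precisely, for every k ∈ ℕ and every real C > 0 there exists n with |Orbit_n(B_n)| > C · 2^{k·n}. -/

import Mathlib

/-- Binary strings of length `n`: the set `{0,1}ⁿ`. -/
abbrev Str (n : ℕ) := Fin n → Bool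

/-- The action of `Sym_n` on strings, permuting positions: `(π·v)_i = v_{π⁻¹(i)}`. -/
def act {n : ℕ} (π : Equiv.Perm (Fin n)) (v : Str n) : Str n := fun i => v (π.symm i)

/-- The action of `Sym_n` on sets of strings. -/
def actSet {n : ℕ} (π : Equiv.Perm (Fin n)) (C : Set (Str n)) : Set (Str n) := act π '' C

/-- The (setwise) stabiliser of a set of strings. -/
def setStab {n : ℕ} (C : Set (Str n)) : Set (Equiv.Perm (Fin n)) := {π | actSet π C = C}

/-- The orbit of a set of strings under `Sym_n`. -/
def setOrbit {n : ℕ} (C : Set (Str n)) : Set (Set (Str n)) := {D | ∃ π, D = actSet π C}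

/-- An ordered partition of `{0,1}ⁿ`: a tuple of pairwise disjoint nonempty subsets
whose union is everything. -/
def IsOrderedPartition {n m : ℕ} (C : Fin m → Set (Str n)) : Prop :=
  (∀ i, (C i).Nonempty) ∧ (Pairwise fun i j => Disjoint (C i) (C j)) ∧ (⋃ i, C i) = Set.univ

/-- The stabiliser of an ordered partition (componentwise). -/
def tupStab {n m : ℕ} (C : Fin m → Set (Str n)) : Set (Equiv.Perm (Fin n)) :=
  {π | ∀ i, actSet π (C i) = C i}

/-- The orbit of an ordered partition under the componentwise action of `Sym_n`. -/
def tupOrbit {n m : ℕ} (C : Fin m → Set (Str n)) : Set (Fin m → Set (Str n)) :=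
  {D | ∃ π, D = fun i => actSet π (C i)}

/-- Pointwise stabiliser of a partition (setoid) of `[n]`: permutations fixing
each part setwise. -/
def ptStab {n : ℕ} (s : Setoid (Fin n)) : Set (Equiv.Perm (Fin n)) :=
  {π | ∀ P ∈ s.classes, (π : Fin n → Fin n) '' P = P}

/-- Setwise stabiliser of a partition of `[n]`: permutations mapping parts to parts. -/
def swStab {n : ℕ} (s : Setoid (Fin n)) : Set (Equiv.Perm (Fin n)) :=
  {π | ∀ P ∈ s.classes, (π : Fin n → Fin n) '' P ∈ s.classes}

/-- A partition `s` of `[n]` is a supporting partition of `G` if its pointwise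
stabiliser is contained in `G`. -/
def IsSupporting {n : ℕ} (G : Set (Equiv.Perm (Fin n))) (s : Setoid (Fin n)) : Prop :=
  ∀ π ∈ ptStab s, π ∈ G

/-- `s` is as coarse as `t`: every part of `t` is contained in some part of `s`. -/
def AsCoarseAs {X : Type*} (s t : Setoid X) : Prop :=
  ∀ P ∈ t.classes, ∃ Q ∈ s.classes, P ⊆ Q

/-- `s` is the coarsest supporting partition of `G`. -/
def IsCoarsestSupp {n : ℕ} (G : Set (Equiv.Perm (Fin n))) (s : Setoid (Fin n)) : Prop :=
  IsSupporting G s ∧ ∀ t, IsSupporting G t → AsCoarseAs s t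

/-- The intersection `⊓_{a ∈ A} f(a)` of a family of partitions: parts are the
nonempty intersections of parts. -/
def interSetoid {X ι : Type*} (A : Set ι) (f : ι → Setoid X) : Setoid X where
  r x y := ∀ a ∈ A, (f a).r x y
  iseqv := ⟨fun x a _ => (f a).refl x,
            fun h a ha => (f a).symm (h a ha),
            fun h h' a ha => (f a).trans (h a ha) (h' a ha)⟩

/-- `SP(a)` for a string `a`: the partition of positions according to the bit of `a`. -/
def strSetoid {n : ℕ} (a : Str n) : Setoid (Fin n) where
  r k j := a k = a j
  iseqv := ⟨fun _ => rfl, Eq.symm, Eq.trans⟩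

/-- `π ∈ Sym_n` realises a permutation `σ` of the parts of a partition `s` if
`π(P) = σ(P)` for every part `P`. -/
def Realises {n : ℕ} (π : Equiv.Perm (Fin n)) {s : Setoid (Fin n)}
    (σ : Equiv.Perm s.classes) : Prop :=
  ∀ P : s.classes, (π : Fin n → Fin n) '' (P : Set (Fin n)) = ((σ P : Set (Fin n)))

/-!
Let `s` be the coarsest supporting partition of `G = Stab(B)`, with `m` parts, `σ` of them
singletons, and `t = m - σ`. Conjugating a supporting partition by an element of `G` gives again a
supporting partition, so by maximality `G` permutes the parts of `s`, whence
`|G| ≤ m! · ∏ |P|!`. Peeling off a smallest non-singleton part at a time gives the multinomial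
bound `t!² · ∏ |P|! ≤ n!`, and `m! ≤ t! · n^σ`; hence `t! ≤ |Orbit(B)| · n^σ`. Eventually
`t ≥ c₁n/2` and `σ ≤ t/2`, and then `t! ≥ (t/e)^t` outgrows `C · 2^{kn} · n^σ`.
-/

open Equiv Finset Filter
open scoped Nat

section SetAction

variable {n : ℕ}

instance : MulAction (Perm (Fin n)) (Set (Str n)) where
  smul := actSet
  one_smul := Set.image_id
  mul_smul π τ C := Set.image_comp (act π) (act τ) C

lemma ncard_setOrbit (C : Set (Str n)) :
    (setOrbit C).ncard = (MulAction.stabilizer (Perm (Fin n)) C).index := by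
  rw [MulAction.index_stabilizer]
  congr 1
  ext D
  exact exists_congr fun _ => eq_comm

end SetAction

section SupportingPartition

variable {n : ℕ} {s : Setoid (Fin n)}

lemma mem_ptStab_iff {π : Perm (Fin n)} : π ∈ ptStab s ↔ ∀ x, s (π x) x := by
  constructor
  · intro h x
    have hx : π x ∈ π '' {y | s y x} := Set.mem_image_of_mem π (s.refl' x)
    rwa [h _ (s.mem_classes x)] at hx
  · rintro h _ ⟨y, rfl⟩
    ext z
    constructor
    · rintro ⟨x, hx, rfl⟩
      exact s.trans' (h x) hx
    · intro hz
      refine ⟨π.symm z, s.trans' (s.symm' ?_) hz, π.apply_symm_apply z⟩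
      simpa using h (π.symm z)

lemma AsCoarseAs.le {α : Type*} {s t : Setoid α} (h : AsCoarseAs s t) : t ≤ s := by
  intro x y hxy
  obtain ⟨Q, hQ, hsub⟩ := h _ (t.mem_classes y)
  exact s.rel_iff_exists_classes.2 ⟨Q, hQ, hsub hxy, hsub (t.refl' y)⟩

lemma IsSupporting.comap {G : Subgroup (Perm (Fin n))} (h : IsSupporting G s) {g : Perm (Fin n)}
    (hg : g ∈ G) : IsSupporting G (s.comap g) := by
  intro π hπ
  have hconj : g * π * g⁻¹ ∈ G :=
    h _ <| mem_ptStab_iff.2 fun y => by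
      simpa [Setoid.comap_rel] using mem_ptStab_iff.1 hπ (g⁻¹ y)
  simpa [mul_assoc] using G.mul_mem (G.mul_mem (G.inv_mem hg) hconj) hg

lemma IsCoarsestSupp.rel_iff {G : Subgroup (Perm (Fin n))} (h : IsCoarsestSupp G s)
    {g : Perm (Fin n)} (hg : g ∈ G) (x y : Fin n) : s x y ↔ s (g x) (g y) := by
  have hpull : ∀ g ∈ G, ∀ x y, s (g x) (g y) → s x y := fun g hg x y =>
    Setoid.le_def.1 (h.2 _ (h.1.comap hg)).le
  refine ⟨fun hxy => ?_, hpull g hg x y⟩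
  exact hpull g⁻¹ (G.inv_mem hg) (g x) (g y) (by simpa using hxy)

end SupportingPartition

section QuotientAction

variable {α : Type*} (G : Subgroup (Perm α)) (s : Setoid α)

def quotientPermHom (hG : ∀ g ∈ G, ∀ x y, s x y ↔ s (g x) (g y)) :
    G →* Perm (Quotient s) where
  toFun g := Quotient.congr g (hG g g.2)
  map_one' := by ext ⟨x⟩; rfl
  map_mul' _ _ := by ext ⟨x⟩; rfl

lemma card_subgroup_le_factorial_mul_prod [Finite α] [Fintype (Quotient s)]
    (hG : ∀ g ∈ G, ∀ x y, s x y ↔ s (g x) (g y)) :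
    Nat.card G ≤ (Fintype.card (Quotient s))! *
      ∏ q, {a | Quotient.mk s a = q}.ncard ! := by
  set f := quotientPermHom G s hG
  have hker : Nat.card f.ker ≤ {g : Perm α | Quotient.mk s ∘ g = Quotient.mk s}.ncard := by
    rw [← Nat.card_coe_set_eq]
    refine Nat.card_le_card_of_injective (fun g => ⟨g.1, funext fun x => ?_⟩) ?_
    · exact congrArg (· ⟦x⟧) g.2
    · intro g h hgh
      exact Subtype.ext <| Subtype.ext <| by simpa using hgh
  have hrange : Nat.card f.range ≤ (Fintype.card (Quotient s))! := by
    rw [← Nat.card_eq_fintype_card, ← Nat.card_perm]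
    exact f.range.card_le_card_group
  calc Nat.card G = Nat.card f.range * Nat.card f.ker := by
        rw [← Subgroup.index_ker, mul_comm, Subgroup.card_mul_index]
    _ ≤ _ := by
        rw [← DomMulAct.stabilizer_ncard]
        exact Nat.mul_le_mul hrange hker

end QuotientAction

lemma sq_mul_factorial_le_descFactorial (t : ℕ) {p : ℕ} (hp : 2 ≤ p) :
    t ^ 2 * p ! ≤ (t * p).descFactorial p := by
  obtain ⟨q, rfl⟩ := Nat.exists_eq_add_of_le' hp
  rcases Nat.eq_zero_or_pos t with rfl | ht
  · simp
  obtain ⟨N, hN⟩ := Nat.exists_eq_add_of_le' (show 2 ≤ t * (q + 2) by nlinarith)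
  have hqN : q ≤ N := by nlinarith
  rw [hN, Nat.succ_descFactorial_succ, Nat.succ_descFactorial_succ]
  calc t ^ 2 * (q + 2)! = (t * (q + 2)) * (t * (q + 1)) * q.descFactorial q := by
        simp only [Nat.descFactorial_self, Nat.factorial_succ]; ring
    _ ≤ (N + 2) * (N + 1) * N.descFactorial q := by gcongr <;> nlinarith
    _ = (N + 1 + 1) * ((N + 1) * N.descFactorial q) := by ring

lemma sq_mul_factorial_mul_factorial_le {t p N : ℕ} (hp : 2 ≤ p) (hN : t * p ≤ N) :
    (t + 1) ^ 2 * p ! * N ! ≤ (p + N)! := by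
  calc (t + 1) ^ 2 * p ! * N ! ≤ ((t + 1) * p).descFactorial p * N ! := by
        gcongr; exact sq_mul_factorial_le_descFactorial _ hp
    _ ≤ (p + N).descFactorial p * N ! := by
        gcongr; nlinarith
    _ = (p + N)! := by
        rw [mul_comm, ← Nat.factorial_mul_descFactorial (Nat.le_add_right p N),
          Nat.add_sub_cancel_left]

lemma factorial_card_sq_mul_prod_factorial_le {ι : Type*} [DecidableEq ι] (p : ι → ℕ)
    (F : Finset ι) (hp : ∀ a ∈ F, 2 ≤ p a) :
    (#F)! ^ 2 * ∏ a ∈ F, (p a)! ≤ (∑ a ∈ F, p a)! := by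
  induction F using Finset.induction_on_min_value p with
  | empty => simp
  | insert a F ha hmin ih =>
    rw [card_insert_of_notMem ha, prod_insert ha, sum_insert ha, Nat.factorial_succ]
    have hsum : #F * p a ≤ ∑ x ∈ F, p x := by
      simpa using card_nsmul_le_sum F p (p a) hmin
    calc ((#F + 1) * (#F)!) ^ 2 * ((p a)! * ∏ x ∈ F, (p x)!)
        = (#F + 1) ^ 2 * (p a)! * ((#F)! ^ 2 * ∏ x ∈ F, (p x)!) := by ring
      _ ≤ (#F + 1) ^ 2 * (p a)! * (∑ x ∈ F, p x)! := by
        gcongr; exact ih fun x hx => hp x (mem_insert_of_mem hx)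
      _ ≤ (p a + ∑ x ∈ F, p x)! :=
        sq_mul_factorial_mul_factorial_le (hp a (mem_insert_self a F)) hsum

lemma factorial_card_filter_sq_mul_prod_factorial_le {ι : Type*} [DecidableEq ι] (p : ι → ℕ)
    (F : Finset ι) :
    (#{a ∈ F | 2 ≤ p a})! ^ 2 * ∏ a ∈ F, (p a)! ≤ (∑ a ∈ F, p a)! := by
  rw [← prod_filter_of_ne (p := fun a => 2 ≤ p a) fun a _ h => by
    by_contra! h'; exact h (Nat.factorial_eq_one.2 (by omega))]
  calc _ ≤ (∑ a ∈ F with 2 ≤ p a, p a)! :=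
        factorial_card_sq_mul_prod_factorial_le p _ fun a ha => (mem_filter.1 ha).2
    _ ≤ (∑ a ∈ F, p a)! := Nat.factorial_le (sum_le_sum_of_subset (filter_subset _ _))

section PartSizes

variable {α : Type*} (s : Setoid α)

lemma setOf_mk_eq_mk (y : α) : {a | Quotient.mk s a = Quotient.mk s y} = {a | s a y} :=
  Set.ext fun _ => Quotient.eq

lemma ncard_classes : s.classes.ncard = Nat.card (Quotient s) := by
  rw [← Nat.card_coe_set_eq, Nat.card_congr s.quotientEquivClasses]

lemma singleton_mem_classes_iff {k : α} : {k} ∈ s.classes ↔ {a | s a k} = {k} := by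
  refine ⟨fun ⟨y, hy⟩ => ?_, fun h => ⟨k, h.symm⟩⟩
  have hky : s k y := hy.subset rfl
  rw [hy]
  exact Set.ext fun a => ⟨fun h => s.trans' h hky, fun h => s.trans' h (s.symm' hky)⟩

lemma ncard_singleton_mem_classes [Fintype (Quotient s)] :
    {k | {k} ∈ s.classes}.ncard = #{q | {a | Quotient.mk s a = q}.ncard = 1} := by
  classical
  rw [← Set.ncard_coe_finset, coe_filter]
  refine Set.ncard_congr (fun k _ => Quotient.mk s k) (fun k hk => ?_) (fun k k' _ hk' hkk' => ?_)
    fun q hq => ?_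
  · simp [setOf_mk_eq_mk, (singleton_mem_classes_iff s).1 hk]
  · have hk : k ∈ {a | s a k'} := Quotient.eq.1 hkk'
    rwa [(singleton_mem_classes_iff s).1 hk'] at hk
  · obtain ⟨a, ha⟩ := Set.ncard_eq_one.1 hq.2
    obtain rfl : Quotient.mk s a = q := ha.symm.subset rfl
    exact ⟨a, (singleton_mem_classes_iff s).2 (by rwa [← setOf_mk_eq_mk]), rfl⟩

variable [Finite α]

lemma one_le_ncard_setOf_mk_eq (q : Quotient s) : 1 ≤ {a | Quotient.mk s a = q}.ncard := by
  obtain ⟨y, rfl⟩ := Quotient.mk_surjective q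
  exact (Set.ncard_pos (Set.toFinite _)).2 ⟨y, rfl⟩

lemma sum_ncard_setOf_mk_eq [Fintype (Quotient s)] :
    ∑ q, {a | Quotient.mk s a = q}.ncard = Nat.card α := by
  classical
  have := Fintype.ofFinite α
  rw [Nat.card_eq_fintype_card, ← card_univ,
    card_eq_sum_card_fiberwise (f := Quotient.mk s) (t := univ) (by simp)]
  refine sum_congr rfl fun q _ => ?_
  rw [← Set.ncard_coe_finset, coe_filter]
  simp

end PartSizes

theorem factorial_le_index_mul_pow {n : ℕ} {G : Subgroup (Perm (Fin n))} {s : Setoid (Fin n)}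
    (h : IsCoarsestSupp G s) :
    (s.classes.ncard - {k | {k} ∈ s.classes}.ncard)! ≤
      G.index * n ^ {k | {k} ∈ s.classes}.ncard := by
  classical
  let : Fintype (Quotient s) := Fintype.ofFinite _
  rw [ncard_classes, ncard_singleton_mem_classes, Nat.card_eq_fintype_card]
  set p : Quotient s → ℕ := fun q => {a | Quotient.mk s a = q}.ncard
  set t := #{q | 2 ≤ p q}
  set σ := #{q | p q = 1}
  have hsplit : t + σ = Fintype.card (Quotient s) := by
    rw [← card_univ, ← card_filter_add_card_filter_not (s := univ) (fun q => 2 ≤ p q)]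
    refine congrArg (t + ·) (congrArg card (filter_congr fun q _ => ?_))
    have : 1 ≤ p q := one_le_ncard_setOf_mk_eq s q
    omega
  rw [← hsplit, Nat.add_sub_cancel]
  have hG := card_subgroup_le_factorial_mul_prod G s fun g hg => h.rel_iff hg
  have hmult := factorial_card_filter_sq_mul_prod_factorial_le p univ
  rw [sum_ncard_setOf_mk_eq, Nat.card_fin] at hmult
  have hindex : Nat.card G * G.index = n ! := by
    rw [Subgroup.card_mul_index, Nat.card_perm, Nat.card_fin]
  have hmn : t + σ ≤ n := by
    rw [hsplit, ← Nat.card_eq_fintype_card]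
    simpa using Nat.card_le_card_of_surjective _ (Quotient.mk_surjective (s := s))
  have hfact : (t + σ)! ≤ t ! * n ^ σ := by
    rw [← Nat.factorial_mul_descFactorial (Nat.le_add_left σ t), Nat.add_sub_cancel]
    gcongr
    exact (Nat.descFactorial_le_pow _ _).trans (Nat.pow_le_pow_left hmn _)
  have hprod : 0 < t ! * ∏ q, (p q)! := by positivity
  refine Nat.le_of_mul_le_mul_left ?_ hprod
  calc (t ! * ∏ q, (p q)!) * t ! = t ! ^ 2 * ∏ q, (p q)! := by ring
    _ ≤ Nat.card G * G.index := hindex ▸ hmult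
    _ ≤ (t + σ)! * (∏ q, (p q)!) * G.index := by rw [hsplit]; gcongr
    _ ≤ t ! * n ^ σ * (∏ q, (p q)!) * G.index := by gcongr
    _ = (t ! * ∏ q, (p q)!) * (G.index * n ^ σ) := by ring

lemma div_exp_one_pow_le_factorial (t : ℕ) : ((t : ℝ) / Real.exp 1) ^ t ≤ t ! := by
  have h := Real.pow_div_factorial_le_exp (t : ℝ) t.cast_nonneg t
  rw [div_le_iff₀ (by positivity)] at h
  rw [div_pow, ← Real.exp_nat_mul, mul_one, div_le_iff₀ (by positivity)]
  linarith

lemma eventually_mul_pow_lt_factorial_sq {A : ℝ} (hA : 0 < A) (D : ℝ) :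
    ∀ᶠ t : ℕ in atTop, D * (A * t) ^ t < ((t ! : ℕ) : ℝ) ^ 2 := by
  filter_upwards [(tendsto_pow_atTop_atTop_of_one_lt one_lt_two).eventually_gt_atTop D,
    tendsto_natCast_atTop_atTop.eventually_ge_atTop (2 * Real.exp 1 ^ 2 * A),
    eventually_gt_atTop 0] with t hD ht ht0
  have htpos : (0 : ℝ) < t := by exact_mod_cast ht0
  calc D * (A * t) ^ t < 2 ^ t * (A * t) ^ t := by gcongr
    _ = (2 * A * t) ^ t := by ring
    _ ≤ (((t : ℝ) / Real.exp 1) ^ 2) ^ t := by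
        gcongr
        rw [div_pow, le_div_iff₀ (by positivity)]
        nlinarith
    _ = (((t : ℝ) / Real.exp 1) ^ t) ^ 2 := by ring
    _ ≤ ((t ! : ℕ) : ℝ) ^ 2 := by gcongr; exact div_exp_one_pow_le_factorial t

lemma eventually_mul_two_pow_mul_pow_lt_factorial {c : ℝ} (hc : 0 < c) (k : ℕ) (C : ℝ) :
    ∀ᶠ n : ℕ in atTop, ∀ σ t : ℕ, c * n ≤ t → 2 * σ ≤ t →
      C * 2 ^ (k * n) * (n : ℝ) ^ σ < t ! := by
  obtain ⟨L, hL⟩ := exists_nat_ge c⁻¹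
  have hLc : 1 ≤ L * c := by
    simpa [inv_mul_cancel₀ hc.ne'] using mul_le_mul_of_nonneg_right hL hc.le
  have hL0 : (0 : ℝ) < L := pos_of_mul_pos_left (one_pos.trans_le hLc) hc.le
  obtain ⟨T, hT⟩ := eventually_atTop.1
    (eventually_mul_pow_lt_factorial_sq (A := 2 ^ (2 * k * L) * L) (by positivity) (C ^ 2))
  filter_upwards [eventually_ge_atTop 1,
    (tendsto_natCast_atTop_atTop.const_mul_atTop hc).eventually_ge_atTop (T : ℝ)]
    with n hn hnT σ t ht hσt
  have hTt : T ≤ t := by exact_mod_cast hnT.trans ht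
  have hnLt : (n : ℝ) ≤ L * t := by nlinarith
  have hnLt' : n ≤ L * t := by exact_mod_cast hnLt
  -- Squaring turns `n ^ σ` into `n ^ (2σ) ≤ n ^ t`; with `n ≤ L t` every factor
  -- becomes a `t`-th power.
  refine lt_of_pow_lt_pow_left₀ 2 (by positivity) ?_
  calc (C * 2 ^ (k * n) * (n : ℝ) ^ σ) ^ 2 = C ^ 2 * 2 ^ (2 * k * n) * (n : ℝ) ^ (2 * σ) := by
        ring
    _ ≤ C ^ 2 * 2 ^ (2 * k * (L * t)) * ((L : ℝ) * t) ^ t := by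
        gcongr
        · norm_num
        · exact (pow_le_pow_right₀ (by exact_mod_cast hn) hσt).trans (by gcongr)
    _ = C ^ 2 * (2 ^ (2 * k * L) * L * t) ^ t := by ring
    _ < ((t ! : ℕ) : ℝ) ^ 2 := hT t hTt

lemma eventually_le_mul_of_tendsto_div_zero {f : ℕ → ℝ}
    (hf : Tendsto (fun n => f n / n) atTop (nhds 0)) {ε : ℝ} (hε : 0 < ε) :
    ∀ᶠ n : ℕ in atTop, f n ≤ ε * n := by
  filter_upwards [hf.eventually (gt_mem_nhds hε), eventually_gt_atTop 0] with n hn hn0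
  exact ((div_lt_iff₀ (by exact_mod_cast hn0)).1 hn).le

/-- if `B_n ⊆ {0,1}ⁿ`, the number of singleton parts of `SP(B_n)` is
at most `f(n) ∈ o(n)`, and `|SP(B_n)| ≥ c₁·n`, then `|Orbit_n(B_n)|` grows faster
than any polynomial in `2ⁿ`. -/
theorem stmt_12
    (B : ∀ n, Set (Str n))
    (sp : ∀ n, Setoid (Fin n))
    (hsp : ∀ n, IsCoarsestSupp (setStab (B n)) (sp n))
    (f : ℕ → ℕ)
    (hf : Filter.Tendsto (fun n => (f n : ℝ) / n) Filter.atTop (nhds 0))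
    (hS : ∃ N, ∀ n ≥ N, ({k : Fin n | {k} ∈ (sp n).classes}).ncard ≤ f n)
    (c₁ : ℝ) (hc₁ : 0 < c₁)
    (hlin : ∃ N, ∀ n ≥ N, c₁ * n ≤ ((sp n).classes.ncard : ℝ)) :
    ∀ (k : ℕ) (C : ℝ), 0 < C → ∃ n, C * (2 : ℝ) ^ (k * n) < ((setOrbit (B n)).ncard : ℝ) := by
  intro k C _
  obtain ⟨N₁, hS⟩ := hS
  obtain ⟨N₂, hlin⟩ := hlin
  obtain ⟨n, hn₁, hn₂, hfn, hgrowth, hn0⟩ := ((eventually_ge_atTop N₁).and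
    ((eventually_ge_atTop N₂).and
    ((eventually_le_mul_of_tendsto_div_zero hf (by positivity : 0 < c₁ / 4)).and
    ((eventually_mul_two_pow_mul_pow_lt_factorial (half_pos hc₁) k C).and
    (eventually_gt_atTop 0))))).exists
  refine ⟨n, ?_⟩
  set σ := {k | {k} ∈ (sp n).classes}.ncard
  set m := (sp n).classes.ncard
  have hσ : (σ : ℝ) ≤ c₁ / 4 * n := (Nat.cast_le.2 (hS n hn₁)).trans hfn
  have hm : c₁ * n ≤ m := hlin n hn₂
  have hσm : 3 * σ ≤ m := by
    have : (3 * σ : ℝ) ≤ m := by nlinarith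
    exact_mod_cast this
  have horbit : (m - σ)! ≤ (setOrbit (B n)).ncard * n ^ σ := by
    rw [ncard_setOrbit]
    exact factorial_le_index_mul_pow (hsp n)
  have hlt := hgrowth σ (m - σ) (by push_cast [(by omega : σ ≤ m)]; nlinarith) (by omega)
  exact lt_of_mul_lt_mul_right (hlt.trans_le (by exact_mod_cast horbit)) (by positivity)
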